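/- Let r > 0 and B_r = {ω ∈ L^∞(S²) : ‖ω‖_{L^∞} ≤ r}. Suppose T_N : L^∞(S²) → 𝔰𝔲(N) are bounded linear quantization maps whose adjoints T_N* satisfy: the union of the ranges of T_N* over all N is dense in L¹(S²), |⟨ω, T_N*W⟩_{L²}| ≤ (2π/N)·‖T_Nω‖_∞·‖W‖₁ where ‖W‖₁ is the trace norm, and T_Nω depends only on finitely many spherical harmonic coefficients of ω (linearly and continuously with respect to weak-* convergence of coefficients). Then on B_r the Fréchet topology generated by the seminorms |ω|_N := ‖T_Nω‖_∞ coincides with the restriction of the weak-* topology of L^∞(S²). -/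

import Mathlib

open MeasureTheory Filter Matrix TopologicalSpace
open scoped Matrix.Norms.L2Operator

notation "𝕊²" => Metric.sphere (0 : EuclideanSpace ℝ (Fin 3)) 1

open Topology
open scoped ENNReal NNReal

section Aux

variable {α : Type*} [MeasurableSpace α] {μ : Measure α}

/-- For `ω ∈ L^∞`, a.e. `|ω x| ≤ ‖ω‖`. -/
lemma aux_ae_abs_le_norm (ω : Lp ℝ ⊤ μ) : ∀ᵐ x ∂μ, |(ω : α → ℝ) x| ≤ ‖ω‖ := by
  have hlt : eLpNormEssSup (ω : α → ℝ) μ < ⊤ := by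
    have := Lp.eLpNorm_lt_top ω
    rwa [eLpNorm_exponent_top] at this
  filter_upwards [ae_le_eLpNormEssSup (f := (ω : α → ℝ)) (μ := μ)] with x hx
  have h1 : ((‖(ω : α → ℝ) x‖₊ : ℝ≥0∞)).toReal ≤ (eLpNormEssSup (ω : α → ℝ) μ).toReal :=
    ENNReal.toReal_mono hlt.ne hx
  simpa [Lp.norm_def, eLpNorm_exponent_top, Real.norm_eq_abs] using h1

lemma aux_integrable_mul (ω : Lp ℝ ⊤ μ) (g : Lp ℝ 1 μ) :
    Integrable (fun x => (ω : α → ℝ) x * (g : α → ℝ) x) μ := by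
  refine (L1.integrable_coeFn g).bdd_mul (c := ‖ω‖) (Lp.aestronglyMeasurable ω) ?_
  filter_upwards [aux_ae_abs_le_norm ω] with x hx
  simpa [Real.norm_eq_abs] using hx

lemma aux_abs_integral_mul_le (ω : Lp ℝ ⊤ μ) (g : Lp ℝ 1 μ) :
    |∫ x, (ω : α → ℝ) x * (g : α → ℝ) x ∂μ| ≤ ‖ω‖ * ‖g‖ := by
  have h1 : |∫ x, (ω : α → ℝ) x * (g : α → ℝ) x ∂μ| ≤
      ∫ x, |(ω : α → ℝ) x * (g : α → ℝ) x| ∂μ := by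
    simpa only [Real.norm_eq_abs] using
      norm_integral_le_integral_norm (fun x => (ω : α → ℝ) x * (g : α → ℝ) x) (μ := μ)
  have h2 : ∫ x, |(ω : α → ℝ) x * (g : α → ℝ) x| ∂μ ≤
      ∫ x, ‖ω‖ * |(g : α → ℝ) x| ∂μ := by
    refine integral_mono_ae ((aux_integrable_mul ω g).abs) ?_ ?_
    · exact ((L1.integrable_coeFn g).abs).const_mul _
    · filter_upwards [aux_ae_abs_le_norm ω] with x hx
      rw [abs_mul]
      exact mul_le_mul_of_nonneg_right hx (abs_nonneg _)
  have h3 : ∫ x, ‖ω‖ * |(g : α → ℝ) x| ∂μ = ‖ω‖ * ‖g‖ := by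
    rw [integral_const_mul, L1.norm_eq_integral_norm]
    simp [Real.norm_eq_abs]
  linarith

lemma aux_pair_sub_left (ω ω' : Lp ℝ ⊤ μ) (g : Lp ℝ 1 μ) :
    ∫ x, ((ω - ω' : Lp ℝ ⊤ μ) : α → ℝ) x * (g : α → ℝ) x ∂μ =
      (∫ x, (ω : α → ℝ) x * (g : α → ℝ) x ∂μ) -
        ∫ x, (ω' : α → ℝ) x * (g : α → ℝ) x ∂μ := by
  have hcoe := Lp.coeFn_sub ω ω'
  have : ∫ x, ((ω - ω' : Lp ℝ ⊤ μ) : α → ℝ) x * (g : α → ℝ) x ∂μ =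
      ∫ x, ((ω : α → ℝ) x * (g : α → ℝ) x - (ω' : α → ℝ) x * (g : α → ℝ) x) ∂μ := by
    refine integral_congr_ae ?_
    filter_upwards [hcoe] with x hx
    rw [hx]; simp [sub_mul]
  rw [this, integral_sub (aux_integrable_mul ω g) (aux_integrable_mul ω' g)]

lemma aux_pair_sub_right (ω : Lp ℝ ⊤ μ) (g g' : Lp ℝ 1 μ) :
    ∫ x, (ω : α → ℝ) x * ((g - g' : Lp ℝ 1 μ) : α → ℝ) x ∂μ =
      (∫ x, (ω : α → ℝ) x * (g : α → ℝ) x ∂μ) -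
        ∫ x, (ω : α → ℝ) x * (g' : α → ℝ) x ∂μ := by
  have hcoe := Lp.coeFn_sub g g'
  have : ∫ x, (ω : α → ℝ) x * ((g - g' : Lp ℝ 1 μ) : α → ℝ) x ∂μ =
      ∫ x, ((ω : α → ℝ) x * (g : α → ℝ) x - (ω : α → ℝ) x * (g' : α → ℝ) x) ∂μ := by
    refine integral_congr_ae ?_
    filter_upwards [hcoe] with x hx
    rw [hx]; simp [mul_sub]
  rw [this, integral_sub (aux_integrable_mul ω g) (aux_integrable_mul ω g')]

end Aux

/-- on the ball `B_r ⊂ L^∞(S²)`, the Fréchet ("matrix") topology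
generated by the seminorms `|ω|_N = ‖T_Nω‖_∞` coincides with the weak-*
topology of `L^∞ = (L¹)^*`, under the stated hypotheses on the quantization
maps `T_N` and their adjoints `T_N^*`. -/
theorem stmt9
    (μ : Measure 𝕊²) [IsFiniteMeasure μ] (r : ℝ) (hr : 0 < r)
    (T : (N : ℕ) → (Lp ℝ ⊤ μ →ₗ[ℝ] Matrix (Fin N) (Fin N) ℂ))
    (Tstar : (N : ℕ) → (Matrix (Fin N) (Fin N) ℂ →ₗ[ℝ] Lp ℝ 1 μ))
    (traceNorm : (N : ℕ) → Matrix (Fin N) (Fin N) ℂ → ℝ)  -- the trace norm ‖·‖₁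
    -- density of the union of the ranges of the adjoints in L¹
    (hdense : Dense (⋃ N : ℕ, Set.range (Tstar N)))
    -- the pairing bound |⟨ω, T_N^* W⟩| ≤ (2π/N)‖T_N ω‖_∞ ‖W‖₁
    (hpair : ∀ (N : ℕ) (ω : Lp ℝ ⊤ μ) (W : Matrix (Fin N) (Fin N) ℂ),
      |∫ x, (ω : 𝕊² → ℝ) x * (Tstar N W : 𝕊² → ℝ) x ∂μ| ≤
        (2 * Real.pi / N) * ‖T N ω‖ * traceNorm N W)
    -- T_N ω depends linearly on finitely many (weak-* continuous) coefficients
    (hfin : ∀ N : ℕ, ∃ (k : ℕ) (φ : Fin k → Lp ℝ 1 μ)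
        (F : (Fin k → ℝ) →ₗ[ℝ] Matrix (Fin N) (Fin N) ℂ),
      ∀ ω : Lp ℝ ⊤ μ,
        T N ω = F (fun i => ∫ x, (ω : 𝕊² → ℝ) x * (φ i : 𝕊² → ℝ) x ∂μ)) :
    -- the matrix (Fréchet) topology on B_r ...
    (⨅ N : ℕ, TopologicalSpace.induced
        (fun ω : {ω : Lp ℝ ⊤ μ // ‖ω‖ ≤ r} => T N ω.1) inferInstance) =
    -- ... equals the weak-* topology on B_r
    (⨅ φ : Lp ℝ 1 μ, TopologicalSpace.induced
        (fun ω : {ω : Lp ℝ ⊤ μ // ‖ω‖ ≤ r} =>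
          ∫ x, (ω.1 : 𝕊² → ℝ) x * (φ : 𝕊² → ℝ) x ∂μ) inferInstance) := by
  classical
  set X := {ω : Lp ℝ ⊤ μ // ‖ω‖ ≤ r} with hX
  set tM : TopologicalSpace X := ⨅ N : ℕ, TopologicalSpace.induced
      (fun ω : X => T N ω.1) inferInstance with htM
  set tW : TopologicalSpace X := ⨅ φ : Lp ℝ 1 μ, TopologicalSpace.induced
      (fun ω : X => ∫ x, (ω.1 : 𝕊² → ℝ) x * (φ : 𝕊² → ℝ) x ∂μ) inferInstance with htW
  set P : Lp ℝ 1 μ → X → ℝ := fun φ ω => ∫ x, (ω.1 : 𝕊² → ℝ) x * (φ : 𝕊² → ℝ) x ∂μ with hP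
  -- Step 1: pairing with an element of the range of `Tstar N` is `tM`-continuous.
  have step1 : ∀ (N : ℕ) (W : Matrix (Fin N) (Fin N) ℂ),
      Continuous[tM, inferInstance] (P (Tstar N W)) := by
    intro N W
    letI : TopologicalSpace X := tM
    show Continuous (P (Tstar N W))
    have hq : Continuous (fun ω : X => T N ω.1) :=
      continuous_iff_le_induced.mpr (iInf_le _ N)
    rw [continuous_iff_continuousAt]
    intro ω₀
    rw [ContinuousAt, Metric.tendsto_nhds]
    intro ε hε
    set c : ℝ := |(2 * Real.pi / N) * traceNorm N W| with hc
    have hc0 : (0 : ℝ) ≤ c := abs_nonneg _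
    have hδ : 0 < ε / (c + 1) := by positivity
    have hev : ∀ᶠ ω : X in nhds ω₀, dist (T N ω.1) (T N ω₀.1) < ε / (c + 1) :=
      Metric.tendsto_nhds.mp (hq.tendsto ω₀) _ hδ
    filter_upwards [hev] with ω hω
    have hsub : P (Tstar N W) ω - P (Tstar N W) ω₀ =
        ∫ x, ((ω.1 - ω₀.1 : Lp ℝ ⊤ μ) : 𝕊² → ℝ) x * ((Tstar N W : Lp ℝ 1 μ) : 𝕊² → ℝ) x ∂μ :=
      (aux_pair_sub_left ω.1 ω₀.1 (Tstar N W)).symm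
    have hb := hpair N (ω.1 - ω₀.1) W
    rw [Real.dist_eq, hsub]
    have hTd : ‖T N (ω.1 - ω₀.1)‖ = dist (T N ω.1) (T N ω₀.1) := by
      rw [map_sub, dist_eq_norm]
    rw [hTd] at hb
    have hd0 : (0 : ℝ) ≤ dist (T N ω.1) (T N ω₀.1) := dist_nonneg
    have hbd : (2 * Real.pi / N) * dist (T N ω.1) (T N ω₀.1) * traceNorm N W ≤
        c * dist (T N ω.1) (T N ω₀.1) := by
      have he : (2 * Real.pi / N) * dist (T N ω.1) (T N ω₀.1) * traceNorm N W =
          ((2 * Real.pi / N) * traceNorm N W) * dist (T N ω.1) (T N ω₀.1) := by ring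
      rw [he]
      exact mul_le_mul_of_nonneg_right (le_abs_self _) hd0
    have h1 : c * dist (T N ω.1) (T N ω₀.1) ≤ (c + 1) * dist (T N ω.1) (T N ω₀.1) := by
      nlinarith
    have h2 : (c + 1) * dist (T N ω.1) (T N ω₀.1) < (c + 1) * (ε / (c + 1)) :=
      mul_lt_mul_of_pos_left hω (by linarith)
    have h3 : (c + 1) * (ε / (c + 1)) = ε := by field_simp
    linarith
  -- Step 2: every pairing is `tM`-continuous (density + uniform approximation).
  have step2 : ∀ φ : Lp ℝ 1 μ, Continuous[tM, inferInstance] (P φ) := by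
    intro φ
    letI : TopologicalSpace X := tM
    show Continuous (P φ)
    rw [continuous_iff_continuousAt]
    intro ω₀
    rw [ContinuousAt, Metric.tendsto_nhds]
    intro ε hε
    obtain ⟨ψ, hψmem, hψ⟩ := hdense.exists_dist_lt φ (show (0:ℝ) < ε / (3 * r) by positivity)
    obtain ⟨S, ⟨N, hN⟩, hψS⟩ := hψmem
    subst hN
    obtain ⟨W, hW⟩ := hψS
    have happrox : ∀ ω : X, |P φ ω - P ψ ω| ≤ ε / 3 := by
      intro ω
      have h1 : P φ ω - P ψ ω =
          ∫ x, (ω.1 : 𝕊² → ℝ) x * ((φ - ψ : Lp ℝ 1 μ) : 𝕊² → ℝ) x ∂μ :=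
        (aux_pair_sub_right ω.1 φ ψ).symm
      rw [h1]
      have h2 := aux_abs_integral_mul_le ω.1 (φ - ψ)
      have h3 : ‖ω.1‖ * ‖φ - ψ‖ ≤ r * ‖φ - ψ‖ :=
        mul_le_mul_of_nonneg_right ω.2 (norm_nonneg _)
      have h4 : dist φ ψ = ‖φ - ψ‖ := dist_eq_norm φ ψ
      have h5 : r * ‖φ - ψ‖ ≤ r * (ε / (3 * r)) := by
        refine mul_le_mul_of_nonneg_left ?_ hr.le
        rw [← h4]; exact hψ.le
      have h6 : r * (ε / (3 * r)) = ε / 3 := by field_simp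
      linarith
    have hmid : ∀ᶠ ω : X in nhds ω₀, dist (P ψ ω) (P ψ ω₀) < ε / 3 := by
      have hcont := step1 N W
      rw [hW] at hcont
      exact Metric.tendsto_nhds.mp (hcont.tendsto ω₀) (ε / 3) (by positivity)
    filter_upwards [hmid] with ω hω
    rw [Real.dist_eq] at hω ⊢
    have htri : |P φ ω - P φ ω₀| ≤ |P φ ω - P ψ ω| + |P ψ ω - P ψ ω₀| + |P ψ ω₀ - P φ ω₀| :=
      calc |P φ ω - P φ ω₀| ≤ |P φ ω - P ψ ω| + |P ψ ω - P φ ω₀| := abs_sub_le _ _ _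
        _ ≤ |P φ ω - P ψ ω| + (|P ψ ω - P ψ ω₀| + |P ψ ω₀ - P φ ω₀|) := by
            have := abs_sub_le (P ψ ω) (P ψ ω₀) (P φ ω₀); linarith
        _ = _ := by ring
    have e1 := happrox ω
    have e2 := happrox ω₀
    have e3 : |P ψ ω₀ - P φ ω₀| = |P φ ω₀ - P ψ ω₀| := abs_sub_comm _ _
    rw [e3] at htri
    linarith
  refine le_antisymm ?_ ?_
  · -- tM ≤ tW
    refine le_iInf fun φ => ?_
    exact continuous_iff_le_induced.mp (step2 φ)
  · -- tW ≤ tM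
    refine le_iInf fun N => ?_
    letI : TopologicalSpace X := tW
    refine continuous_iff_le_induced.mp ?_
    obtain ⟨k, φ, F, hF⟩ := hfin N
    have hcoord : ∀ i : Fin k, Continuous (P (φ i)) := fun i =>
      continuous_iff_le_induced.mpr (iInf_le _ (φ i))
    have hvec : Continuous (fun ω : X => fun i => P (φ i) ω) := continuous_pi hcoord
    have hFcont : Continuous F := F.continuous_of_finiteDimensional
    have heq : (fun ω : X => T N ω.1) = F ∘ (fun ω i => P (φ i) ω) := funext fun ω => hF ω.1
    rw [heq]
    exact hFcont.comp hvec
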